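/- arXiv:0709.3123 — 2 statements merged into one kernel-verified Lean document; each statement's English description precedes it below -/
import Mathlib

section
/- Let g, g̃ be two positive definite symmetric bilinear forms on ℝ^n with g(ξ,ξ) ≥ m|ξ|², g̃(ξ,ξ) ≥ m|ξ|² for some m > 0, and suppose |g(ξ,ξ) − g̃(ξ,ξ)| ≤ ε|ξ|² for all ξ. Let h be a symmetric bilinear form with |h(ξ,ξ)| ≤ K|ξ|² for all ξ. Then the i-th generalized eigenvalues κ_i of h with respect to g and κ̃_i of h with respect to g̃ (each listed in increasing order) satisfy |κ_i − κ̃_i| ≤ (K/m²)ε for all i. -/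
/-!
For each `i`, the span of the `g`-eigenvectors `b₀, …, bᵢ` and the span of the `g̃`-eigenvectors
`b̃ᵢ, …, b̃ₙ₋₁` have dimensions adding up to `n + 1`, so they share some `ξ ≠ 0`. Since eigenvectors
for distinct eigenvalues are `g`-orthogonal, `κ̃ᵢ g̃(ξ,ξ) ≤ h(ξ,ξ) ≤ κᵢ g(ξ,ξ)`, hence
`(κ̃ᵢ - κᵢ) g̃(ξ,ξ) ≤ κᵢ (g - g̃)(ξ,ξ) ≤ |κᵢ| ε |ξ|²`. With `|κᵢ| ≤ K/m` and `g̃(ξ,ξ) ≥ m |ξ|²`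
this gives `κ̃ᵢ - κᵢ ≤ (K/m²) ε`, and the other inequality follows by exchanging `g` and `g̃`.
-/

open Matrix

theorem exists_ne_zero_mem_span_range_inter {K V α β : Type*} [DivisionRing K] [AddCommGroup V]
    [Module K V] [Module.Finite K V] [Fintype α] [Fintype β] {u : α → V} {w : β → V}
    (hu : LinearIndependent K u) (hw : LinearIndependent K w)
    (hcard : Module.finrank K V < Fintype.card α + Fintype.card β) :
    ∃ ξ ≠ 0, ξ ∈ Submodule.span K (Set.range u) ∧ ξ ∈ Submodule.span K (Set.range w) := by
  by_contra! hdisj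
  have := (hu.sum_type hw (Submodule.disjoint_def.mpr fun ξ hξu hξw => by
    by_contra hξ; exact hdisj ξ hξ hξu hξw)).fintype_card_le_finrank
  rw [Fintype.card_sum] at this
  omega

namespace Matrix

section GeneralizedEigen

variable {ι α : Type*} [Fintype ι] [Fintype α]

lemma IsSymm.mulVec_dotProduct_comm {A : Matrix ι ι ℝ} (hA : A.IsSymm) (x y : ι → ℝ) :
    A *ᵥ x ⬝ᵥ y = A *ᵥ y ⬝ᵥ x := by
  rw [dotProduct_comm, dotProduct_mulVec, ← mulVec_transpose, hA.eq]

lemma PosSemidef.mulVec_dotProduct_self_nonneg {A : Matrix ι ι ℝ} (hA : A.PosSemidef)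
    (x : ι → ℝ) : 0 ≤ A *ᵥ x ⬝ᵥ x := by
  simpa [dotProduct_comm] using hA.dotProduct_mulVec_nonneg x

lemma mulVec_sum_smul_dotProduct_sum_smul (M : Matrix ι ι ℝ) (c : α → ℝ) (b : α → ι → ℝ) :
    M *ᵥ (∑ j, c j • b j) ⬝ᵥ ∑ k, c k • b k = ∑ j, ∑ k, c j * c k * (M *ᵥ b j ⬝ᵥ b k) := by
  simp only [mulVec_sum, mulVec_smul, sum_dotProduct, dotProduct_sum, smul_dotProduct,
    dotProduct_smul, smul_eq_mul, Finset.mul_sum]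
  rw [Finset.sum_comm]
  exact Finset.sum_congr rfl fun j _ => Finset.sum_congr rfl fun k _ => by ring

lemma mulVec_dotProduct_eq_zero_of_generalized_eigen {h g : Matrix ι ι ℝ} (hh : h.IsSymm)
    (hg : g.IsSymm) {v w : ι → ℝ} {a b : ℝ} (hv : h *ᵥ v = a • g *ᵥ v)
    (hw : h *ᵥ w = b • g *ᵥ w) (hab : a ≠ b) : g *ᵥ v ⬝ᵥ w = 0 := by
  have : a * (g *ᵥ v ⬝ᵥ w) = b * (g *ᵥ v ⬝ᵥ w) := by
    rw [← smul_eq_mul, ← smul_dotProduct, ← hv, hh.mulVec_dotProduct_comm, hw, smul_dotProduct,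
      hg.mulVec_dotProduct_comm, smul_eq_mul]
  exact (mul_eq_mul_right_iff.mp this).resolve_left hab

theorem mulVec_dotProduct_le_of_mem_span_generalized_eigen {h g : Matrix ι ι ℝ}
    (hh : h.IsSymm) (hg : g.PosSemidef) {κ : α → ℝ} {b : α → ι → ℝ}
    (hb : ∀ j, h *ᵥ b j = κ j • g *ᵥ b j) {μ : ℝ} (hμ : ∀ j, κ j ≤ μ) {ξ : ι → ℝ}
    (hξ : ξ ∈ Submodule.span ℝ (Set.range b)) : h *ᵥ ξ ⬝ᵥ ξ ≤ μ * (g *ᵥ ξ ⬝ᵥ ξ) := by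
  obtain ⟨c, rfl⟩ := (Submodule.mem_span_range_iff_exists_fun ℝ).mp hξ
  have hgs : g.IsSymm := isHermitian_iff_isSymm.mp hg.isHermitian
  -- `g (b j) (b k) = 0` unless `κ j = κ k`, so `μ g - h` acts on the span as `g` with the
  -- coefficients rescaled by `√(μ - κ j)`.
  have entry : ∀ j k, μ * (g *ᵥ b j ⬝ᵥ b k) - h *ᵥ b j ⬝ᵥ b k
      = √(μ - κ j) * √(μ - κ k) * (g *ᵥ b j ⬝ᵥ b k) := by
    intro j k
    have hjk : h *ᵥ b j ⬝ᵥ b k = κ j * (g *ᵥ b j ⬝ᵥ b k) := by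
      rw [hb j, smul_dotProduct, smul_eq_mul]
    by_cases hκ : κ j = κ k
    · rw [hjk, ← hκ, Real.mul_self_sqrt (sub_nonneg.mpr (hμ j))]
      ring
    · rw [hjk, mulVec_dotProduct_eq_zero_of_generalized_eigen hh hgs (hb j) (hb k) hκ]
      ring
  have key : μ * (g *ᵥ (∑ j, c j • b j) ⬝ᵥ ∑ j, c j • b j) - h *ᵥ (∑ j, c j • b j) ⬝ᵥ
      ∑ j, c j • b j = g *ᵥ (∑ j, (c j * √(μ - κ j)) • b j) ⬝ᵥ ∑ j, (c j * √(μ - κ j)) • b j := by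
    simp only [mulVec_sum_smul_dotProduct_sum_smul, Finset.mul_sum, ← Finset.sum_sub_distrib]
    refine Finset.sum_congr rfl fun j _ => Finset.sum_congr rfl fun k _ => ?_
    linear_combination c j * c k * entry j k
  linarith [hg.mulVec_dotProduct_self_nonneg (∑ j, (c j * √(μ - κ j)) • b j)]

lemma abs_le_div_of_mulVec_eq_smul {h g : Matrix ι ι ℝ} {v : ι → ℝ} (hv : v ≠ 0) {κ K m : ℝ}
    (hm : 0 < m) (hgm : m * (v ⬝ᵥ v) ≤ g *ᵥ v ⬝ᵥ v) (hK : |h *ᵥ v ⬝ᵥ v| ≤ K * (v ⬝ᵥ v))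
    (hκ : h *ᵥ v = κ • g *ᵥ v) : |κ| ≤ K / m := by
  have hvv : 0 < v ⬝ᵥ v := by simpa using dotProduct_star_self_pos_iff.mpr hv
  have hgv : 0 < g *ᵥ v ⬝ᵥ v := (mul_pos hm hvv).trans_le hgm
  rw [hκ, smul_dotProduct, smul_eq_mul, abs_mul, abs_of_pos hgv] at hK
  rw [le_div_iff₀ hm]
  refine le_of_mul_le_mul_right ?_ hvv
  calc |κ| * m * (v ⬝ᵥ v) ≤ |κ| * (g *ᵥ v ⬝ᵥ v) := by
        rw [mul_assoc]; exact mul_le_mul_of_nonneg_left hgm (abs_nonneg κ)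
    _ ≤ K * (v ⬝ᵥ v) := hK

end GeneralizedEigen

variable {n : ℕ} {h g g' : Matrix (Fin n) (Fin n) ℝ} {κ κ' : Fin n → ℝ}
  {b b' : Module.Basis (Fin n) ℝ (Fin n → ℝ)}

theorem exists_ne_zero_rayleigh_bounds (hh : h.IsSymm) (hg : g.PosSemidef)
    (hg' : g'.PosSemidef) (hκ : Monotone κ) (hκ' : Monotone κ')
    (hb : ∀ j, h *ᵥ b j = κ j • g *ᵥ b j) (hb' : ∀ j, h *ᵥ b' j = κ' j • g' *ᵥ b' j)
    (i : Fin n) :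
    ∃ ξ ≠ 0, κ' i * (g' *ᵥ ξ ⬝ᵥ ξ) ≤ h *ᵥ ξ ⬝ᵥ ξ ∧ h *ᵥ ξ ⬝ᵥ ξ ≤ κ i * (g *ᵥ ξ ⬝ᵥ ξ) := by
  obtain ⟨ξ, hξ0, hξb, hξb'⟩ := exists_ne_zero_mem_span_range_inter
    (b.linearIndependent.comp ((↑) : Finset.Iic i → Fin n) Subtype.val_injective)
    (b'.linearIndependent.comp ((↑) : Finset.Ici i → Fin n) Subtype.val_injective)
    (by simp only [Module.finrank_fin_fun, Fintype.card_coe, Fin.card_Iic, Fin.card_Ici]; omega)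
  refine ⟨ξ, hξ0, ?_, ?_⟩
  · have := mulVec_dotProduct_le_of_mem_span_generalized_eigen hh.neg hg'
      (κ := fun j : Finset.Ici i => -κ' j)
      (fun j => by rw [neg_mulVec, Function.comp_apply, hb', neg_smul])
      (fun j => neg_le_neg (hκ' (Finset.mem_Ici.mp j.2))) hξb'
    rw [neg_mulVec, neg_dotProduct] at this
    linarith
  · exact mulVec_dotProduct_le_of_mem_span_generalized_eigen hh hg
      (κ := fun j : Finset.Iic i => κ j) (fun j => hb j)
      (fun j => hκ (Finset.mem_Iic.mp j.2)) hξb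

theorem sub_le_of_generalized_eigenbasis (hh : h.IsSymm) (hg : g.PosSemidef)
    (hg' : g'.PosSemidef) {K m ε : ℝ} (hm : 0 < m)
    (hgm : ∀ ξ : Fin n → ℝ, m * (ξ ⬝ᵥ ξ) ≤ g *ᵥ ξ ⬝ᵥ ξ)
    (hg'm : ∀ ξ : Fin n → ℝ, m * (ξ ⬝ᵥ ξ) ≤ g' *ᵥ ξ ⬝ᵥ ξ)
    (hclose : ∀ ξ : Fin n → ℝ, |g *ᵥ ξ ⬝ᵥ ξ - g' *ᵥ ξ ⬝ᵥ ξ| ≤ ε * (ξ ⬝ᵥ ξ))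
    (hK : ∀ ξ : Fin n → ℝ, |h *ᵥ ξ ⬝ᵥ ξ| ≤ K * (ξ ⬝ᵥ ξ)) (hκ : Monotone κ) (hκ' : Monotone κ')
    (hb : ∀ j, h *ᵥ b j = κ j • g *ᵥ b j) (hb' : ∀ j, h *ᵥ b' j = κ' j • g' *ᵥ b' j)
    (i : Fin n) : κ' i - κ i ≤ K / m ^ 2 * ε := by
  obtain ⟨ξ, hξ0, lower, upper⟩ := exists_ne_zero_rayleigh_bounds hh hg hg' hκ hκ' hb hb' i
  have hκi : |κ i| ≤ K / m := abs_le_div_of_mulVec_eq_smul (b.ne_zero i) hm (hgm _) (hK _) (hb i)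
  have hξξ : 0 < ξ ⬝ᵥ ξ := by simpa using dotProduct_star_self_pos_iff.mpr hξ0
  have gap : (κ' i - κ i) * (g' *ᵥ ξ ⬝ᵥ ξ) ≤ K / m * ε * (ξ ⬝ᵥ ξ) := calc
    _ ≤ κ i * (g *ᵥ ξ ⬝ᵥ ξ - g' *ᵥ ξ ⬝ᵥ ξ) := by linarith
    _ ≤ |κ i| * |g *ᵥ ξ ⬝ᵥ ξ - g' *ᵥ ξ ⬝ᵥ ξ| := abs_mul (κ i) _ ▸ le_abs_self _
    _ ≤ K / m * (ε * (ξ ⬝ᵥ ξ)) :=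
      mul_le_mul hκi (hclose ξ) (abs_nonneg _) ((abs_nonneg _).trans hκi)
    _ = K / m * ε * (ξ ⬝ᵥ ξ) := by ring
  have hKm : 0 ≤ K / m := (abs_nonneg _).trans hκi
  rw [show K / m ^ 2 * ε = K / m * ε / m by ring]
  rcases le_or_gt (κ' i - κ i) 0 with hle | hpos
  · have hε : 0 ≤ ε := nonneg_of_mul_nonneg_left ((abs_nonneg _).trans (hclose ξ)) hξξ
    exact hle.trans (div_nonneg (mul_nonneg hKm hε) hm.le)
  · rw [le_div_iff₀ hm]
    refine le_of_mul_le_mul_right ?_ hξξ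
    calc (κ' i - κ i) * m * (ξ ⬝ᵥ ξ) = (κ' i - κ i) * (m * (ξ ⬝ᵥ ξ)) := mul_assoc ..
      _ ≤ (κ' i - κ i) * (g' *ᵥ ξ ⬝ᵥ ξ) := mul_le_mul_of_nonneg_left (hg'm ξ) hpos.le
      _ ≤ K / m * ε * (ξ ⬝ᵥ ξ) := gap

end Matrix

/-- Stability of generalized eigenvalues under perturbation of the metric: if the
positive definite forms `g`, `g̃` are uniformly bounded below by `m > 0`, their
quadratic forms differ by at most `ε|ξ|²`, and `|h(ξ,ξ)| ≤ K|ξ|²`, then the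
increasingly ordered generalized eigenvalues of `h` with respect to `g` and to `g̃`
differ by at most `(K/m²)ε`. -/
theorem generalized_eigenvalues_metric_stability {n : ℕ}
    (h g g' : Matrix (Fin n) (Fin n) ℝ)
    (hh : h.IsSymm) (hgpd : g.PosDef) (hg'pd : g'.PosDef)
    (K m ε : ℝ) (hm : 0 < m)
    (hgm : ∀ ξ : Fin n → ℝ, m * (ξ ⬝ᵥ ξ) ≤ (g.mulVec ξ) ⬝ᵥ ξ)
    (hg'm : ∀ ξ : Fin n → ℝ, m * (ξ ⬝ᵥ ξ) ≤ (g'.mulVec ξ) ⬝ᵥ ξ)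
    (hclose : ∀ ξ : Fin n → ℝ, |(g.mulVec ξ) ⬝ᵥ ξ - (g'.mulVec ξ) ⬝ᵥ ξ| ≤ ε * (ξ ⬝ᵥ ξ))
    (hK : ∀ ξ : Fin n → ℝ, |(h.mulVec ξ) ⬝ᵥ ξ| ≤ K * (ξ ⬝ᵥ ξ))
    (κ κ' : Fin n → ℝ) (hκmono : Monotone κ) (hκ'mono : Monotone κ')
    (hκ : ∃ b : Module.Basis (Fin n) ℝ (Fin n → ℝ),
      ∀ i, h.mulVec (b i) = κ i • g.mulVec (b i))
    (hκ' : ∃ b : Module.Basis (Fin n) ℝ (Fin n → ℝ),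
      ∀ i, h.mulVec (b i) = κ' i • g'.mulVec (b i)) :
    ∀ i, |κ i - κ' i| ≤ K / m ^ 2 * ε := by
  obtain ⟨b, hb⟩ := hκ
  obtain ⟨b', hb'⟩ := hκ'
  intro i
  rw [abs_sub_le_iff]
  constructor
  · exact sub_le_of_generalized_eigenbasis hh hg'pd.posSemidef hgpd.posSemidef hm hg'm hgm
      (fun ξ => abs_sub_comm (g *ᵥ ξ ⬝ᵥ ξ) _ ▸ hclose ξ) hK hκ'mono hκmono hb' hb i
  · exact sub_le_of_generalized_eigenbasis hh hgpd.posSemidef hg'pd.posSemidef hm hgm hg'm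
      hclose hK hκmono hκ'mono hb hb' i
end

section
/- Let F : Γ → ℝ be monotone (strictly increasing in each variable) on an open convex cone Γ ⊆ ℝ^n, and suppose symmetric matrices h, h̄ (with common positive definite metric g) satisfy h ≥ h̄ in the Loewner order, with both pairs admissible (eigenvalues in Γ). Then F(eigenvalues of h w.r.t. g) ≥ F(eigenvalues of h̄ w.r.t. g). -/
/-!
This is the Courant–Fischer argument for the pencil `(h, g)`. Fix `i`. The span `L` of the
first `i + 1` generalized eigenvectors of `h` and the span `U` of the last `n - i` generalized
eigenvectors of `h̄` have dimensions adding up to `n + 1`, so they share a vector `v ≠ 0`.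
On `L` the quotient `⟨v, h v⟩ / ⟨v, g v⟩` is at most `κ i`, on `U` the corresponding quotient
for `h̄` is at least `κ̄ i`, and `h ≥ h̄` then yields `κ̄ i ≤ κ i`. Monotonicity of `F`
finishes.
-/

open Matrix

lemma Module.Basis.span_Iic_inf_span_Ici_ne_bot {K V : Type*} [Field K] [AddCommGroup V]
    [Module K V] {n : ℕ} (b b' : Module.Basis (Fin n) K V) (i : Fin n) :
    Submodule.span K (Set.range fun j : Set.Iic i => b j) ⊓
      Submodule.span K (Set.range fun j : Set.Ici i => b' j) ≠ ⊥ := by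
  have : FiniteDimensional K V := b.finiteDimensional_of_finite
  set L := Submodule.span K (Set.range fun j : Set.Iic i => b j)
  set U := Submodule.span K (Set.range fun j : Set.Ici i => b' j)
  have hL : Module.finrank K L = i + 1 := by
    refine (finrank_span_eq_card
      (b.linearIndependent.comp (Subtype.val : Set.Iic i → _) Subtype.val_injective)).trans ?_
    rw [Fintype.card_Iic, Fin.card_Iic]
  have hU : Module.finrank K U = n - i := by
    refine (finrank_span_eq_card
      (b'.linearIndependent.comp (Subtype.val : Set.Ici i → _) Subtype.val_injective)).trans ?_
    rw [Fintype.card_Ici, Fin.card_Ici]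
  have hsup : Module.finrank K ↥(L ⊔ U) ≤ n := by
    simpa [Module.finrank_eq_card_basis b] using Submodule.finrank_le (L ⊔ U)
  have := Submodule.finrank_sup_add_finrank_inf_eq L U
  intro hbot
  rw [hbot, finrank_bot] at this
  omega

namespace Matrix

variable {m ι R : Type*} [Fintype m]

lemma IsSymm.dotProduct_mulVec_comm [CommSemiring R] {A : Matrix m m R} (hA : A.IsSymm)
    (x y : m → R) : x ⬝ᵥ (A *ᵥ y) = y ⬝ᵥ (A *ᵥ x) := by
  rw [dotProduct_mulVec, ← mulVec_transpose, hA.eq, dotProduct_comm]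

lemma sum_smul_dotProduct_mulVec_sum_smul [Fintype ι] [CommSemiring R] (A : Matrix m m R)
    (u : ι → m → R) (c d : ι → R) :
    (∑ j, c j • u j) ⬝ᵥ (A *ᵥ ∑ k, d k • u k) =
      ∑ j, ∑ k, c j * d k * (u j ⬝ᵥ (A *ᵥ u k)) := by
  simp only [mulVec_sum, mulVec_smul, sum_dotProduct, dotProduct_sum, smul_dotProduct,
    dotProduct_smul, smul_eq_mul, Finset.mul_sum]
  rw [Finset.sum_comm]
  exact Finset.sum_congr rfl fun j _ => Finset.sum_congr rfl fun k _ => by ring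

lemma dotProduct_mulVec_eq_zero_of_eigenvalue_ne [CommRing R] [IsDomain R] {h g : Matrix m m R}
    (hh : h.IsSymm) (hg : g.IsSymm) {u : ι → m → R} {κ : ι → R}
    (hu : ∀ j, h *ᵥ u j = κ j • g *ᵥ u j) {j k : ι} (hjk : κ j ≠ κ k) :
    u j ⬝ᵥ (g *ᵥ u k) = 0 := by
  have h₁ : u j ⬝ᵥ (h *ᵥ u k) = κ k * (u j ⬝ᵥ (g *ᵥ u k)) := by
    rw [hu, dotProduct_smul, smul_eq_mul]
  have h₂ : u j ⬝ᵥ (h *ᵥ u k) = κ j * (u j ⬝ᵥ (g *ᵥ u k)) := by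
    rw [hh.dotProduct_mulVec_comm, hu, dotProduct_smul, smul_eq_mul, hg.dotProduct_mulVec_comm]
  exact (mul_eq_mul_right_iff.mp (h₁.symm.trans h₂)).resolve_left (Ne.symm hjk)

variable {h g : Matrix m m ℝ}

section Rayleigh

variable [Fintype ι] {u : ι → m → ℝ} {κ : ι → ℝ} {μ : ℝ} {v : m → ℝ}

/-- With `t j = √(μ - κ j)`, the `g`-orthogonality of eigenvectors for distinct eigenvalues
turns `(μ g - h)[v]` for `v = ∑ c j u j` into `g[w]` for `w = ∑ c j t j u j`. -/
lemma dotProduct_mulVec_le_of_mem_span (hh : h.IsSymm) (hg : g.PosSemidef)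
    (hu : ∀ j, h *ᵥ u j = κ j • g *ᵥ u j) (hκ : ∀ j, κ j ≤ μ)
    (hv : v ∈ Submodule.span ℝ (Set.range u)) :
    v ⬝ᵥ (h *ᵥ v) ≤ μ * (v ⬝ᵥ (g *ᵥ v)) := by
  obtain ⟨c, rfl⟩ := (Submodule.mem_span_range_iff_exists_fun ℝ).mp hv
  have hg_symm : g.IsSymm := isHermitian_iff_isSymm.mp hg.isHermitian
  set t : ι → ℝ := fun j => √(μ - κ j)
  have hgap : ∀ k, (μ • g - h) *ᵥ u k = (μ - κ k) • g *ᵥ u k := fun k => by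
    rw [sub_mulVec, smul_mulVec, hu, sub_smul]
  have hterm : ∀ j k, c j * c k * (u j ⬝ᵥ ((μ • g - h) *ᵥ u k))
      = c j * t j * (c k * t k) * (u j ⬝ᵥ (g *ᵥ u k)) := fun j k => by
    rw [hgap, dotProduct_smul, smul_eq_mul]
    rcases eq_or_ne (κ j) (κ k) with hjk | hjk
    · have htt : t j * t k = μ - κ k := by
        simp only [t, hjk]
        exact Real.mul_self_sqrt (sub_nonneg.2 (hκ k))
      rw [← htt]
      ring
    · rw [dotProduct_mulVec_eq_zero_of_eigenvalue_ne hh hg_symm hu hjk]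
      ring
  have hgap_nonneg :
      0 ≤ (∑ j, c j • u j) ⬝ᵥ ((μ • g - h) *ᵥ ∑ j, c j • u j) := by
    simp only [sum_smul_dotProduct_mulVec_sum_smul, hterm]
    rw [← sum_smul_dotProduct_mulVec_sum_smul g u]
    simpa using hg.dotProduct_mulVec_nonneg (∑ j, (c j * t j) • u j)
  rw [sub_mulVec, smul_mulVec, dotProduct_sub, dotProduct_smul, smul_eq_mul] at hgap_nonneg
  linarith

lemma le_dotProduct_mulVec_of_mem_span (hh : h.IsSymm) (hg : g.PosSemidef)
    (hu : ∀ j, h *ᵥ u j = κ j • g *ᵥ u j) (hκ : ∀ j, μ ≤ κ j)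
    (hv : v ∈ Submodule.span ℝ (Set.range u)) :
    μ * (v ⬝ᵥ (g *ᵥ v)) ≤ v ⬝ᵥ (h *ᵥ v) := by
  have hneg := dotProduct_mulVec_le_of_mem_span hh.neg hg (κ := -κ) (μ := -μ)
    (fun j => by rw [neg_mulVec, hu, Pi.neg_apply, neg_smul]) (fun j => neg_le_neg (hκ j)) hv
  rw [neg_mulVec, dotProduct_neg] at hneg
  linarith

end Rayleigh

theorem generalizedEigenvalue_le_of_posSemidef_sub {n : ℕ} {h' : Matrix m m ℝ}
    {κ κ' : Fin n → ℝ} (hh : h.IsSymm) (hh' : h'.IsSymm)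
    (hg : g.PosDef) (hle : (h - h').PosSemidef) (hκ : Monotone κ) (hκ' : Monotone κ')
    (b b' : Module.Basis (Fin n) ℝ (m → ℝ))
    (hb : ∀ i, h *ᵥ b i = κ i • g *ᵥ b i)
    (hb' : ∀ i, h' *ᵥ b' i = κ' i • g *ᵥ b' i)
    (i : Fin n) : κ' i ≤ κ i := by
  obtain ⟨v, ⟨hvL, hvU⟩, hv⟩ :=
    Submodule.exists_mem_ne_zero_of_ne_bot (b.span_Iic_inf_span_Ici_ne_bot b' i)
  have hupper : v ⬝ᵥ (h *ᵥ v) ≤ κ i * (v ⬝ᵥ (g *ᵥ v)) :=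
    dotProduct_mulVec_le_of_mem_span hh hg.posSemidef (fun j : Set.Iic i => hb j)
      (fun j => hκ j.2) hvL
  have hlower : κ' i * (v ⬝ᵥ (g *ᵥ v)) ≤ v ⬝ᵥ (h' *ᵥ v) :=
    le_dotProduct_mulVec_of_mem_span hh' hg.posSemidef (fun j : Set.Ici i => hb' j)
      (fun j => hκ' j.2) hvU
  have hloewner : v ⬝ᵥ (h' *ᵥ v) ≤ v ⬝ᵥ (h *ᵥ v) := by
    have := hle.dotProduct_mulVec_nonneg v
    rw [star_trivial, sub_mulVec, dotProduct_sub] at this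
    linarith
  have hpos : 0 < v ⬝ᵥ (g *ᵥ v) := by simpa using hg.dotProduct_mulVec_pos hv
  exact le_of_mul_le_mul_right (hlower.trans (hloewner.trans hupper)) hpos

end Matrix

theorem curvature_function_monotone_loewner_general {n : ℕ}
    (Γ : Set (Fin n → ℝ))
    (F : (Fin n → ℝ) → ℝ)
    (hmono : ∀ x ∈ Γ, ∀ y ∈ Γ, (∀ i, x i ≤ y i) → x ≠ y → F x < F y)
    (h h' g : Matrix (Fin n) (Fin n) ℝ)
    (hh : h.IsSymm) (hh' : h'.IsSymm) (hg : g.PosDef)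
    (hle : (h - h').PosSemidef)
    (κ κ' : Fin n → ℝ) (hκmono : Monotone κ) (hκ'mono : Monotone κ')
    (hκ : ∃ b : Module.Basis (Fin n) ℝ (Fin n → ℝ),
      ∀ i, h.mulVec (b i) = κ i • g.mulVec (b i))
    (hκ' : ∃ b : Module.Basis (Fin n) ℝ (Fin n → ℝ),
      ∀ i, h'.mulVec (b i) = κ' i • g.mulVec (b i))
    (hadm : κ ∈ Γ) (hadm' : κ' ∈ Γ) :
    F κ' ≤ F κ := by
  obtain ⟨b, hb⟩ := hκ
  obtain ⟨b', hb'⟩ := hκ'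
  have hle_eig : ∀ i, κ' i ≤ κ i :=
    generalizedEigenvalue_le_of_posSemidef_sub hh hh' hg hle hκmono hκ'mono b b' hb hb'
  rcases eq_or_ne κ' κ with rfl | hne
  · rfl
  · exact (hmono κ' hadm' κ hadm hle_eig hne).le

/-- Monotonicity of a curvature function under the Loewner order on second
fundamental forms: if `h ≥ h̄` with respect to the common positive definite metric
`g`, and both vectors of (increasingly ordered) generalized eigenvalues lie in the
defining cone `Γ`, then `F(κ(h,g)) ≥ F(κ(h̄,g))`. -/
theorem curvature_function_monotone_loewner {n : ℕ}
    (Γ : Set (Fin n → ℝ)) (hΓopen : IsOpen Γ) (hΓconv : Convex ℝ Γ)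
    (hΓcone : ∀ x ∈ Γ, ∀ t : ℝ, 0 < t → t • x ∈ Γ)
    (F : (Fin n → ℝ) → ℝ)
    (hmono : ∀ x ∈ Γ, ∀ y ∈ Γ, (∀ i, x i ≤ y i) → x ≠ y → F x < F y)
    (h h' g : Matrix (Fin n) (Fin n) ℝ)
    (hh : h.IsSymm) (hh' : h'.IsSymm) (hg : g.PosDef)
    (hle : (h - h').PosSemidef)
    (κ κ' : Fin n → ℝ) (hκmono : Monotone κ) (hκ'mono : Monotone κ')
    (hκ : ∃ b : Module.Basis (Fin n) ℝ (Fin n → ℝ),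
      ∀ i, h.mulVec (b i) = κ i • g.mulVec (b i))
    (hκ' : ∃ b : Module.Basis (Fin n) ℝ (Fin n → ℝ),
      ∀ i, h'.mulVec (b i) = κ' i • g.mulVec (b i))
    (hadm : κ ∈ Γ) (hadm' : κ' ∈ Γ) :
    F κ' ≤ F κ :=
  curvature_function_monotone_loewner_general Γ F hmono h h' g hh hh' hg hle κ κ' hκmono hκ'mono hκ
    hκ' hadm hadm'
end
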